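/- If q > binomial(n,t) and t < k, then the graph Λ_t(n,k) is connected. -/

import Mathlib

open Finset

variable (F : Type) [Field F] [Fintype F] [DecidableEq F]

/-- The dual code of a linear code `C ⊆ F^n`, with respect to the standard bilinear form. -/
def dualCode (n : ℕ) (C : Submodule F (Fin n → F)) : Submodule F (Fin n → F) where
  carrier := {v | ∀ c ∈ C, ∑ i, v i * c i = 0}
  zero_mem' := by intro c _; simp
  add_mem' := by
    intro a b ha hb c hc
    simp only [Set.mem_setOf_eq] at *
    simp [add_mul, Finset.sum_add_distrib, ha c hc, hb c hc]
  smul_mem' := by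
    intro r a ha c hc
    simp only [Set.mem_setOf_eq] at *
    simp [smul_eq_mul, mul_assoc, ← Finset.mul_sum, ha c hc]

/-- `goodCode F n t k C` says that `C` is an `[n,k]`-linear code over `F` whose dual minimum
distance is at least `t+1`, i.e. `C ∈ C_t(n,k)`. -/
def goodCode (n t k : ℕ) (C : Submodule F (Fin n → F)) : Prop :=
  Module.finrank F C = k ∧ ∀ v ∈ dualCode F n C, v ≠ 0 → t + 1 ≤ hammingNorm v

/-- The Grassmann graph `Δ_t(n,k)` of codes in `C_t(n,k)`: two codes are adjacent iff
their intersection has dimension `k-1`. -/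
def deltaGraph (n t k : ℕ) : SimpleGraph {C : Submodule F (Fin n → F) // goodCode F n t k C} where
  Adj X Y := X ≠ Y ∧ Module.finrank F ↥(X.1 ⊓ Y.1) = k - 1
  symm := ⟨by
    rintro X Y ⟨h1, h2⟩
    exact ⟨h1.symm, by rwa [inf_comm]⟩⟩
  loopless := ⟨by rintro X ⟨h1, _⟩; exact h1 rfl⟩

/-- The graph `Λ_t(n,k)` of codes in `C_t(n,k)`: two codes are adjacent iff
their intersection belongs to `C_t(n,k-1)`. -/
def lambdaGraph (n t k : ℕ) : SimpleGraph {C : Submodule F (Fin n → F) // goodCode F n t k C} where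
  Adj X Y := X ≠ Y ∧ goodCode F n t (k-1) (X.1 ⊓ Y.1)
  symm := ⟨by
    rintro X Y ⟨h1, h2⟩
    exact ⟨h1.symm, by rwa [inf_comm]⟩⟩
  loopless := ⟨by rintro X ⟨h1, _⟩; exact h1 rfl⟩

/-- A code `C ∈ C_t(n,k)` is isolated if no `(k-1)`-dimensional subspace of `C`
belongs to `C_t(n,k-1)`. -/
def IsIsolated (n t k : ℕ) (C : Submodule F (Fin n → F)) : Prop :=
  ∀ D : Submodule F (Fin n → F), D ≤ C → ¬ goodCode F n t (k-1) D

/-- A monomial transformation of `F^n`: a permutation of the coordinates composed with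
multiplication of each coordinate by a nonzero scalar. -/
def IsMonomial (n : ℕ) (ρ : (Fin n → F) ≃ₗ[F] (Fin n → F)) : Prop :=
  ∃ (σ : Equiv.Perm (Fin n)) (d : Fin n → F),
    (∀ i, d i ≠ 0) ∧ ∀ (v : Fin n → F) (i : Fin n), ρ v i = d i * v (σ i)

/-- `S_s(Ω)`: the set of points (`1`-dimensional subspaces) of `PG(k-1,q)` lying on a subspace
spanned by `s+1` points of `Ω`. (We represent any subspace by the corresponding submodule of
`F^k`, and points of `PG(k-1,q)` by `1`-dimensional submodules.) -/
def satPoints (k s : ℕ) (Ω : Set (Submodule F (Fin k → F))) : Set (Submodule F (Fin k → F)) :=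
  {P | ∃ T : Finset (Submodule F (Fin k → F)), ↑T ⊆ Ω ∧ T.card = s + 1 ∧ P ≤ T.sup id}

/-- A set `Ω` of points of `PG(k-1,q)` is `s`-saturating if `S_s(Ω)` is the whole point set of
`PG(k-1,q)` while (for `s ≥ 1`) `S_{s-1}(Ω)` is not. -/
def IsSaturating (k s : ℕ) (Ω : Set (Submodule F (Fin k → F))) : Prop :=
  (∀ P : Submodule F (Fin k → F), Module.finrank F P = 1 → P ∈ satPoints F k s Ω) ∧
  (1 ≤ s → ¬ ∀ P : Submodule F (Fin k → F), Module.finrank F P = 1 → P ∈ satPoints F k (s-1) Ω)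

/-!
A code `C` of dimension `k` lies in `C_t(n,k)` iff `dualCode C` meets none of the spaces
`supportedOn S` (`#S = t`) of vectors supported on `t` coordinates. As `q > binomial(n,t)`, one can
pick a vector outside a proper subspace chosen for each such `S`; this gives two constructions:

* every `X ∈ C_t(n,k)` has a hyperplane `X ⊓ wᗮ ∈ C_t(n,k-1)`, for `w` outside all
  `dualCode X ⊔ supportedOn S`;
* for distinct `D, D' ∈ C_t(n,k-1)`, take a hyperplane `E` of `D` containing `D ⊓ D'` and `y ∈ D'`
  outside `E` and all hyperplanes `(dualCode E ⊓ supportedOn S)ᗮ`; then `D'' = E ⊔ ⟨y⟩` is a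
  neighbour of `D` in `Δ_t(n,k-1)` meeting `D'` in a larger space, so `Δ_t(n,k-1)` is connected.

Neighbours `D, D''` in `Δ_t(n,k-1)` span a code of `C_t(n,k)`, and codes of `C_t(n,k)` through a
common hyperplane in `C_t(n,k-1)` are equal or adjacent in `Λ_t(n,k)`; so a path in `Δ_t(n,k-1)`
between hyperplanes of `X` and `Y` lifts to a path from `X` to `Y` in `Λ_t(n,k)`.
-/

lemma Submodule.finrank_inf_lt_of_ne {K V : Type*} [DivisionRing K] [AddCommGroup V] [Module K V]
    [FiniteDimensional K V] {X Y : Submodule K V}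
    (h : Module.finrank K X = Module.finrank K Y) (hne : X ≠ Y) :
    Module.finrank K ↥(X ⊓ Y) < Module.finrank K X :=
  Submodule.finrank_lt_finrank_of_lt <| lt_of_le_of_ne inf_le_left fun h' =>
    hne (Submodule.eq_of_le_of_finrank_eq (inf_eq_left.mp h') h)

lemma Submodule.disjoint_of_finrank_le_one {K V : Type*} [DivisionRing K] [AddCommGroup V]
    [Module K V] {W U : Submodule K V} [FiniteDimensional K W]
    (hW : Module.finrank K W ≤ 1) (h : ¬ W ≤ U) : Disjoint W U := by
  have : Module.finrank K ↥(W ⊓ U) < Module.finrank K W :=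
    Submodule.finrank_lt_finrank_of_lt (inf_lt_left.mpr h)
  rw [disjoint_iff, ← Submodule.finrank_eq_zero]
  omega

lemma Submodule.exists_mem_forall_notMem_of_card_lt {ι K M : Type*} [Field K] [AddCommGroup M]
    [Module K M] {V : Submodule K M} {s : Finset ι} {p : ι → Submodule K M}
    (h : ∀ i ∈ s, ¬ V ≤ p i) (hs : s.card < ENat.card K) : ∃ y ∈ V, ∀ i ∈ s, y ∉ p i := by
  have hcover := Submodule.iUnion_ssubset_of_forall_ne_top_of_card_lt Finset.univ
    (fun i : s => (p i).comap V.subtype)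
    (fun i => by rw [Ne, Submodule.comap_subtype_eq_top]; exact h i i.2) (by simpa using hs)
  obtain ⟨⟨y, hyV⟩, -, hy⟩ := Set.exists_of_ssubset hcover
  simp only [Finset.mem_univ, Set.iUnion_true, Set.mem_iUnion, not_exists] at hy
  exact ⟨y, hyV, fun i hi => hy ⟨i, hi⟩⟩

def supportedOn {ι : Type*} (R : Type*) [Semiring R] (S : Finset ι) : Submodule R (ι → R) :=
  Submodule.pi (↑S)ᶜ fun _ => ⊥

section SupportedOn

variable {ι R : Type*} {S : Finset ι}

lemma mem_supportedOn [Semiring R] {v : ι → R} : v ∈ supportedOn R S ↔ ∀ i ∉ S, v i = 0 := by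
  simp [supportedOn, Submodule.mem_pi]

lemma finrank_supportedOn_le [Field R] [Fintype ι] :
    Module.finrank R (supportedOn R S) ≤ S.card := by
  let restrict := (LinearMap.funLeft R R (Subtype.val : S → ι)).domRestrict (supportedOn R S)
  have hinj : Function.Injective restrict := by
    rw [← LinearMap.ker_eq_bot, LinearMap.ker_eq_bot']
    rintro ⟨v, hv⟩ hv0
    ext i
    by_cases hi : i ∈ S
    · exact congrFun hv0 ⟨i, hi⟩
    · exact mem_supportedOn.mp hv i hi
  simpa using LinearMap.finrank_le_finrank_of_injective hinj

lemma hammingNorm_le_card_of_mem_supportedOn [Fintype ι] [Semiring R] [DecidableEq R] {v : ι → R}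
    (hv : v ∈ supportedOn R S) : hammingNorm v ≤ S.card :=
  Finset.card_le_card fun i hi => by
    by_contra hiS
    exact (Finset.mem_filter.mp hi).2 (mem_supportedOn.mp hv i hiS)

lemma exists_card_eq_mem_supportedOn [Fintype ι] [Semiring R] [DecidableEq R] {v : ι → R} {t : ℕ}
    (hv : hammingNorm v ≤ t) (ht : t ≤ Fintype.card ι) :
    ∃ S : Finset ι, S.card = t ∧ v ∈ supportedOn R S := by
  obtain ⟨S, hsub, -, hcard⟩ := Finset.exists_subsuperset_card_eq
    (Finset.subset_univ (Finset.univ.filter (v · ≠ 0))) hv (by simpa using ht)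
  exact ⟨S, hcard, mem_supportedOn.mpr fun i hi => by
    by_contra h0
    exact hi (hsub (by simp [h0]))⟩

end SupportedOn

section Codes

variable {F : Type} [Field F] {n : ℕ}

lemma dualCode_eq_orthogonal (C : Submodule F (Fin n → F)) :
    dualCode F n C = LinearMap.BilinForm.orthogonal (dotProductBilin F F) C := by
  ext v
  simp [dualCode, dotProduct, mul_comm]

lemma nondegenerate_dotProductBilin :
    LinearMap.BilinForm.Nondegenerate (dotProductBilin F F : LinearMap.BilinForm F (Fin n → F)) :=
  ⟨fun v hv => funext fun i => by simpa using hv (Pi.single i 1),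
   fun v hv => funext fun i => by simpa using hv (Pi.single i 1)⟩

lemma isRefl_dotProductBilin :
    LinearMap.BilinForm.IsRefl (dotProductBilin F F : LinearMap.BilinForm F (Fin n → F)) :=
  fun v w h => by simpa [dotProduct_comm] using h

lemma finrank_dualCode (C : Submodule F (Fin n → F)) :
    Module.finrank F (dualCode F n C) = n - Module.finrank F C := by
  rw [dualCode_eq_orthogonal, LinearMap.BilinForm.finrank_orthogonal nondegenerate_dotProductBilin,
    Module.finrank_fin_fun]

lemma dualCode_dualCode (C : Submodule F (Fin n → F)) : dualCode F n (dualCode F n C) = C := by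
  simp only [dualCode_eq_orthogonal]
  exact LinearMap.BilinForm.orthogonal_orthogonal nondegenerate_dotProductBilin
    isRefl_dotProductBilin C

lemma dualCode_anti {C C' : Submodule F (Fin n → F)} (h : C ≤ C') :
    dualCode F n C' ≤ dualCode F n C :=
  fun _ hv c hc => hv c (h hc)

lemma le_dualCode_comm {C C' : Submodule F (Fin n → F)} :
    C ≤ dualCode F n C' ↔ C' ≤ dualCode F n C :=
  ⟨fun h x hx y hy => by simpa [mul_comm] using h hy x hx,
   fun h x hx y hy => by simpa [mul_comm] using h hy x hx⟩

lemma dualCode_sup (C C' : Submodule F (Fin n → F)) :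
    dualCode F n (C ⊔ C') = dualCode F n C ⊓ dualCode F n C' := by
  refine le_antisymm (le_inf (dualCode_anti le_sup_left) (dualCode_anti le_sup_right)) ?_
  rw [le_dualCode_comm, sup_le_iff]
  exact ⟨le_dualCode_comm.mp inf_le_left, le_dualCode_comm.mp inf_le_right⟩

lemma dualCode_inf_dualCode_span (C : Submodule F (Fin n → F)) (w : Fin n → F) :
    dualCode F n (C ⊓ dualCode F n (F ∙ w)) = dualCode F n C ⊔ F ∙ w := by
  conv_lhs => rw [← dualCode_dualCode C, ← dualCode_sup]
  exact dualCode_dualCode _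

lemma finrank_inf_dualCode_span_add_one {C : Submodule F (Fin n → F)} {w : Fin n → F}
    (hw : w ∉ dualCode F n C) :
    Module.finrank F ↥(C ⊓ dualCode F n (F ∙ w)) + 1 = Module.finrank F C := by
  have h := finrank_dualCode (C ⊓ dualCode F n (F ∙ w))
  rw [dualCode_inf_dualCode_span, Submodule.finrank_sup_span_singleton hw, finrank_dualCode] at h
  have hC := Submodule.finrank_le C
  have hD := Submodule.finrank_le (C ⊓ dualCode F n (F ∙ w))
  simp only [Module.finrank_fin_fun] at hC hD
  omega

lemma exists_le_finrank_add_one_eq {W C : Submodule F (Fin n → F)} (h : W < C) :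
    ∃ E, W ≤ E ∧ E ≤ C ∧ Module.finrank F E + 1 = Module.finrank F C := by
  have hlt : dualCode F n C < dualCode F n W := by
    refine lt_of_le_of_ne (dualCode_anti h.le) fun heq => h.ne ?_
    rw [← dualCode_dualCode W, ← heq, dualCode_dualCode]
  obtain ⟨u, huW, huC⟩ := SetLike.exists_of_lt hlt
  refine ⟨C ⊓ dualCode F n (F ∙ u), le_inf h.le ?_, inf_le_left,
    finrank_inf_dualCode_span_add_one huC⟩
  rwa [le_dualCode_comm, Submodule.span_singleton_le_iff_mem]

variable [DecidableEq F] {t k : ℕ}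

lemma goodCode_iff_disjoint (htn : t ≤ n) {C : Submodule F (Fin n → F)} :
    goodCode F n t k C ↔ Module.finrank F C = k ∧
      ∀ S : Finset (Fin n), S.card = t → Disjoint (dualCode F n C) (supportedOn F S) := by
  refine and_congr_right fun _ => ⟨fun h S hS => ?_, fun h v hv hv0 => ?_⟩
  · refine Submodule.disjoint_def.mpr fun v hv hvS => by_contra fun hv0 => ?_
    have := hammingNorm_le_card_of_mem_supportedOn hvS
    have := h v hv hv0
    omega
  · by_contra hwt
    obtain ⟨S, hS, hvS⟩ :=
      exists_card_eq_mem_supportedOn (v := v) (t := t) (by omega) (by simpa using htn)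
    exact hv0 (Submodule.disjoint_def.mp (h S hS) v hv hvS)

lemma le_of_goodCode {C : Submodule F (Fin n → F)} (hC : goodCode F n t k C) : k ≤ n := by
  simpa [hC.1] using Submodule.finrank_le C

lemma goodCode_of_le {j j' : ℕ} {D E : Submodule F (Fin n → F)} (hD : goodCode F n t j D)
    (hDE : D ≤ E) (hE : Module.finrank F E = j') : goodCode F n t j' E :=
  ⟨hE, fun v hv hv0 => hD.2 v (dualCode_anti hDE hv) hv0⟩

lemma exists_goodCode_le_of_goodCode [Fintype F] (htk : t < k)
    (hq : n.choose t < Fintype.card F) {X : Submodule F (Fin n → F)}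
    (hX : goodCode F n t k X) : ∃ D ≤ X, goodCode F n t (k - 1) D := by
  have hkn := le_of_goodCode hX
  rw [goodCode_iff_disjoint (by omega)] at hX
  have hproper : ∀ S ∈ powersetCard t univ, ¬ ⊤ ≤ dualCode F n X ⊔ supportedOn F S := by
    intro S hS htop
    have h := (Submodule.finrank_mono htop).trans
      (Submodule.finrank_add_le_finrank_add_finrank _ _)
    have := finrank_supportedOn_le (R := F) (S := S)
    rw [finrank_dualCode, hX.1, finrank_top, Module.finrank_fin_fun] at h
    rw [mem_powersetCard_univ.mp hS] at this
    omega
  obtain ⟨w, -, hw⟩ := Submodule.exists_mem_forall_notMem_of_card_lt hproper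
    (by simpa [ENat.card_eq_coe_fintype_card] using hq)
  obtain ⟨S₀, hS₀⟩ : (powersetCard t (univ : Finset (Fin n))).Nonempty :=
    powersetCard_nonempty.mpr (by simpa using (by omega : t ≤ n))
  have hwX : w ∉ dualCode F n X := fun h => hw S₀ hS₀ (Submodule.mem_sup_left h)
  refine ⟨X ⊓ dualCode F n (F ∙ w), inf_le_left, (goodCode_iff_disjoint (by omega)).mpr
    ⟨by have := finrank_inf_dualCode_span_add_one hwX; omega, fun S hS => ?_⟩⟩
  have hwS : w ∉ supportedOn F S ⊔ dualCode F n X := by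
    rw [sup_comm]; exact hw S (mem_powersetCard_univ.mpr hS)
  rw [dualCode_inf_dualCode_span]
  exact (Disjoint.disjoint_sup_right_of_disjoint_sup_left (hX.2 S hS).symm
    ((Submodule.disjoint_span_singleton' (ne_of_mem_of_not_mem (zero_mem _) hwX).symm).mpr
      hwS)).symm

lemma finrank_dualCode_inf_supportedOn_le_one (htn : t ≤ n) {D E : Submodule F (Fin n → F)}
    (hD : goodCode F n t k D) (hED : E ≤ D) (hE : Module.finrank F E + 1 = k)
    {S : Finset (Fin n)} (hS : S.card = t) :
    Module.finrank F ↥(dualCode F n E ⊓ supportedOn F S) ≤ 1 := by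
  have hkn := le_of_goodCode hD
  rw [goodCode_iff_disjoint htn] at hD
  have hdisj : Disjoint (dualCode F n D) (dualCode F n E ⊓ supportedOn F S) :=
    (hD.2 S hS).mono_right inf_le_right
  have hsup := Submodule.finrank_mono (sup_le (dualCode_anti hED) inf_le_left :
    dualCode F n D ⊔ (dualCode F n E ⊓ supportedOn F S) ≤ dualCode F n E)
  have := Submodule.finrank_sup_add_finrank_inf_eq (dualCode F n D)
    (dualCode F n E ⊓ supportedOn F S)
  rw [disjoint_iff.mp hdisj, finrank_bot] at this
  rw [finrank_dualCode] at hsup this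
  omega

lemma goodCode_sup_span (htn : t ≤ n) {D E : Submodule F (Fin n → F)}
    (hD : goodCode F n t k D) (hED : E ≤ D) (hE : Module.finrank F E + 1 = k)
    {y : Fin n → F} (hyE : y ∉ E)
    (hy : ∀ S : Finset (Fin n), S.card = t → dualCode F n E ⊓ supportedOn F S ≠ ⊥ →
      y ∉ dualCode F n (dualCode F n E ⊓ supportedOn F S)) :
    goodCode F n t k (E ⊔ F ∙ y) := by
  refine (goodCode_iff_disjoint htn).mpr
    ⟨by rw [Submodule.finrank_sup_span_singleton hyE, hE], fun S hS => ?_⟩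
  rw [disjoint_iff, dualCode_sup, inf_right_comm, ← disjoint_iff]
  by_cases hW : dualCode F n E ⊓ supportedOn F S = ⊥
  · rw [hW]; exact disjoint_bot_left
  refine Submodule.disjoint_of_finrank_le_one
    (finrank_dualCode_inf_supportedOn_le_one htn hD hED hE hS) ?_
  rw [le_dualCode_comm, Submodule.span_singleton_le_iff_mem]
  exact hy S hS hW

lemma exists_mem_notMem_goodCode_sup_span [Fintype F] (htn : t ≤ n)
    (hq : n.choose t < Fintype.card F) {D D' E : Submodule F (Fin n → F)}
    (hD : goodCode F n t k D) (hD' : goodCode F n t k D') (hED : E ≤ D)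
    (hE : Module.finrank F E + 1 = k) :
    ∃ y ∈ D', y ∉ E ∧ goodCode F n t k (E ⊔ F ∙ y) := by
  -- `dualCode (W S)` is `⊤` when `W S = ⊥`; putting `E` in its place keeps `¬ D' ≤ Q S`, and
  -- since `E ≤ Q S`, avoiding the `Q S` forces `y ∉ E`.
  let W S := dualCode F n E ⊓ supportedOn F S
  let Q S := if W S = ⊥ then E else dualCode F n (W S)
  have hEQ S : E ≤ Q S := by
    unfold Q; split_ifs
    exacts [le_rfl, le_dualCode_comm.mp inf_le_left]
  have hD'Q : ∀ S ∈ powersetCard t univ, ¬ D' ≤ Q S := by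
    intro S hS hle
    unfold Q at hle; split_ifs at hle with hW
    · have := Submodule.finrank_mono hle
      rw [hD'.1] at this
      omega
    refine hW (eq_bot_iff.mpr ((le_inf (le_dualCode_comm.mp hle) inf_le_right).trans ?_))
    exact (disjoint_iff.mp (((goodCode_iff_disjoint htn).mp hD').2 S
      (mem_powersetCard_univ.mp hS))).le
  obtain ⟨y, hyD', hyQ⟩ := Submodule.exists_mem_forall_notMem_of_card_lt hD'Q
    (by simpa [ENat.card_eq_coe_fintype_card] using hq)
  obtain ⟨S₀, hS₀⟩ : (powersetCard t (univ : Finset (Fin n))).Nonempty :=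
    powersetCard_nonempty.mpr (by simpa using htn)
  have hyE : y ∉ E := fun h => hyQ S₀ hS₀ (hEQ S₀ h)
  exact ⟨y, hyD', hyE, goodCode_sup_span htn hD hED hE hyE fun S hS hW => by
    simpa [Q, W, hW] using hyQ S (mem_powersetCard_univ.mpr hS)⟩

lemma exists_deltaGraph_adj_finrank_inf_lt [Fintype F] (htn : t ≤ n)
    (hq : n.choose t < Fintype.card F) {D D' : Submodule F (Fin n → F)}
    (hD : goodCode F n t k D) (hD' : goodCode F n t k D') (hne : D ≠ D') :
    ∃ (D'' : Submodule F (Fin n → F)) (hD'' : goodCode F n t k D''),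
      (deltaGraph F n t k).Adj ⟨D, hD⟩ ⟨D'', hD''⟩ ∧
      Module.finrank F ↥(D ⊓ D') < Module.finrank F ↥(D'' ⊓ D') := by
  have hDD' := Submodule.finrank_inf_lt_of_ne (hD.1.trans hD'.1.symm) hne
  obtain ⟨E, hDD'E, hED, hE⟩ := exists_le_finrank_add_one_eq
    (lt_of_le_of_ne inf_le_left fun h => by rw [h] at hDD'; omega)
  rw [hD.1] at hE
  obtain ⟨y, hyD', hyE, hD''⟩ := exists_mem_notMem_goodCode_sup_span htn hq hD hD' hED hE
  have hyD : y ∉ D := fun h => hyE (hDD'E ⟨h, hyD'⟩)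
  have hyD'' : y ∈ E ⊔ F ∙ y := Submodule.mem_sup_right (Submodule.mem_span_singleton_self y)
  have hne'' : D ≠ E ⊔ F ∙ y := fun h => hyD (h ▸ hyD'')
  refine ⟨E ⊔ F ∙ y, hD'', ⟨fun h => hne'' (congrArg Subtype.val h), ?_⟩, ?_⟩
  · have h₁ := Submodule.finrank_inf_lt_of_ne (hD.1.trans hD''.1.symm) hne''
    have h₂ := Submodule.finrank_mono (le_inf hED le_sup_left : E ≤ D ⊓ (E ⊔ F ∙ y))
    rw [hD.1] at h₁
    show Module.finrank F ↥(D ⊓ (E ⊔ F ∙ y)) = k - 1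
    omega
  · exact Submodule.finrank_lt_finrank_of_lt (SetLike.lt_iff_le_and_exists.mpr
      ⟨le_inf (hDD'E.trans le_sup_left) inf_le_right, y, Submodule.mem_inf.mpr ⟨hyD'', hyD'⟩,
        fun h => hyD (Submodule.mem_inf.mp h).1⟩)

theorem deltaGraph_reachable [Fintype F] (htn : t ≤ n) (hq : n.choose t < Fintype.card F)
    {D D' : Submodule F (Fin n → F)} (hD : goodCode F n t k D) (hD' : goodCode F n t k D') :
    (deltaGraph F n t k).Reachable ⟨D, hD⟩ ⟨D', hD'⟩ := by
  by_cases hne : D = D'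
  · subst hne; rfl
  obtain ⟨D'', hD'', hadj, hlt⟩ := exists_deltaGraph_adj_finrank_inf_lt htn hq hD hD' hne
  exact hadj.reachable.trans (deltaGraph_reachable htn hq hD'' hD')
termination_by k - Module.finrank F ↥(D ⊓ D')
decreasing_by
  have := Submodule.finrank_mono (inf_le_left : D'' ⊓ D' ≤ D'')
  rw [hD''.1] at this
  omega

theorem deltaGraph_preconnected [Fintype F] (htn : t ≤ n) (hq : n.choose t < Fintype.card F) :
    (deltaGraph F n t k).Preconnected :=
  fun ⟨_, hD⟩ ⟨_, hD'⟩ => deltaGraph_reachable htn hq hD hD'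

lemma finrank_sup_of_deltaGraph_adj {u v : {C : Submodule F (Fin n → F) // goodCode F n t k C}}
    (h : (deltaGraph F n t k).Adj u v) :
    Module.finrank F ↥(u.1 ⊔ v.1) = k + 1 := by
  have hlt := Submodule.finrank_inf_lt_of_ne (u.2.1.trans v.2.1.symm)
    fun huv => h.1 (Subtype.ext huv)
  have := Submodule.finrank_sup_add_finrank_inf_eq u.1 v.1
  rw [u.2.1, v.2.1, h.2] at this
  rw [h.2, u.2.1] at hlt
  omega

lemma lambdaGraph_reachable_of_le {X Y D : Submodule F (Fin n → F)}
    (hX : goodCode F n t k X) (hY : goodCode F n t k Y) (hD : goodCode F n t (k - 1) D)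
    (hDX : D ≤ X) (hDY : D ≤ Y) : (lambdaGraph F n t k).Reachable ⟨X, hX⟩ ⟨Y, hY⟩ := by
  by_cases hXY : X = Y
  · subst hXY; rfl
  refine SimpleGraph.Adj.reachable ⟨fun h => hXY (congrArg Subtype.val h), ?_⟩
  have hlt := Submodule.finrank_inf_lt_of_ne (hX.1.trans hY.1.symm) hXY
  have hDXY : D = X ⊓ Y :=
    Submodule.eq_of_le_of_finrank_le (le_inf hDX hDY) (by rw [hD.1, ← hX.1]; omega)
  exact hDXY ▸ hD

lemma lambdaGraph_reachable_of_deltaGraph_reachable (hk : 0 < k)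
    {u v : {C : Submodule F (Fin n → F) // goodCode F n t (k - 1) C}}
    (huv : (deltaGraph F n t (k - 1)).Reachable u v) {X Y : Submodule F (Fin n → F)}
    (hX : goodCode F n t k X) (hY : goodCode F n t k Y) (huX : u.1 ≤ X) (hvY : v.1 ≤ Y) :
    (lambdaGraph F n t k).Reachable ⟨X, hX⟩ ⟨Y, hY⟩ := by
  obtain ⟨p⟩ := huv
  induction p generalizing X with
  | nil => exact lambdaGraph_reachable_of_le hX hY (Subtype.prop _) huX hvY
  | @cons u w v hadj p ih =>
    have hZ : goodCode F n t k (u.1 ⊔ w.1) :=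
      goodCode_of_le u.2 le_sup_left (by rw [finrank_sup_of_deltaGraph_adj hadj]; omega)
    exact (lambdaGraph_reachable_of_le hX hZ u.2 huX le_sup_left).trans (ih hZ le_sup_right hvY)

end Codes

theorem lambda_connected_of_large_q
    {n k t : ℕ} (htk : t < k)
    (hq : Nat.choose n t < Fintype.card F) :
    (lambdaGraph F n t k).Preconnected := by
  rintro ⟨X, hX⟩ ⟨Y, hY⟩
  have htn : t ≤ n := htk.le.trans (le_of_goodCode hX)
  obtain ⟨D, hDX, hD⟩ := exists_goodCode_le_of_goodCode htk hq hX
  obtain ⟨D', hD'Y, hD'⟩ := exists_goodCode_le_of_goodCode htk hq hY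
  exact lambdaGraph_reachable_of_deltaGraph_reachable (by omega)
    (deltaGraph_preconnected htn hq ⟨D, hD⟩ ⟨D', hD'⟩) hX hY hDX hD'Y
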